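/- (Polynomial-weighted symmetry) Let A, B, q, m be integers with A + B ≥ q ≥ 0 and let P(w) be a rational polynomial of degree q. Then Σ_{w ∈ ℤ} P(w)·[A; w]·[B; m−w] = Σ_{w ∈ ℤ} P(w)·[A; A−w]·[B; B−m+w], where [·;·] is the modified binomial coefficient and both sums have finitely many nonzero terms. -/

import Mathlib

/-!
Write `[A; w] = binom(A, A - w)` with a binomial coefficient whose lower index is an integer
(zero when negative). Both sides are linear in `P`, and the falling factorials `w(w-1)⋯(w-j+1)`
with `j ≤ deg P` span the polynomials of degree `≤ deg P`, so it suffices to take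
`P(w) = binom(w, j)`. Trinomial revision and Chu–Vandermonde evaluate the left side to
`binom(A, j) binom(A + B - j, A + B - m)` and the right side to
`binom(A, j) binom(A + B - j, m - j)`. Since `j ≤ A + B`, the upper index `A + B - j` is a
natural number, and the two agree by the symmetry `binom(N, k) = binom(N, N - k)`, which fails
for negative `N`.
-/

/-- The modified binomial coefficient `[A; B]` of Lee. -/
def mbinom (A B : ℤ) : ℚ :=
  if B < A then ∏ i ∈ Finset.range (A - B).toNat, (((A : ℚ) - i) / (((A : ℚ) - (B : ℚ)) - i))
  else if A = B then 1 else 0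

open Finset Polynomial

section IntChoose

variable {R : Type*} [CommRing R] [BinomialRing R]

noncomputable def intChoose (x : R) (k : ℤ) : R := if 0 ≤ k then Ring.choose x k.toNat else 0

theorem intChoose_of_neg (x : R) {k : ℤ} (hk : k < 0) : intChoose x k = 0 := if_neg (by omega)

@[simp]
theorem intChoose_natCast (x : R) (k : ℕ) : intChoose x k = Ring.choose x k := by
  simp [intChoose]

theorem intChoose_natCast_sub (N : ℕ) (k : ℤ) :
    intChoose (N : R) (N - k) = intChoose (N : R) k := by
  rcases lt_or_ge k 0 with hk | hk
  · lift N - k to ℕ using (by omega) with M hM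
    rw [intChoose_natCast, Ring.choose_natCast, Nat.choose_eq_zero_of_lt (by omega),
      Nat.cast_zero, intChoose_of_neg _ hk]
  rcases lt_or_ge (N : ℤ) k with hNk | hNk
  · lift k to ℕ using hk
    rw [intChoose_of_neg _ (by omega), intChoose_natCast, Ring.choose_natCast,
      Nat.choose_eq_zero_of_lt (by omega), Nat.cast_zero]
  · lift k to ℕ using hk
    rw [← Nat.cast_sub (by omega), intChoose_natCast, intChoose_natCast, Ring.choose_natCast,
      Ring.choose_natCast, Nat.choose_symm (by omega)]

theorem choose_sub_mul_intChoose (x : R) (j : ℕ) (k : ℤ) :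
    Ring.choose (x - k) j * intChoose x k = Ring.choose x j * intChoose (x - j) k := by
  rcases lt_or_ge k 0 with hk | hk
  · rw [intChoose_of_neg _ hk, intChoose_of_neg _ hk, mul_zero, mul_zero]
  lift k to ℕ using hk
  have hk := Ring.choose_smul_choose x (Nat.le_add_right k j)
  have hj := Ring.choose_smul_choose x (Nat.le_add_left j k)
  rw [Nat.add_sub_cancel_left] at hk
  rw [Nat.add_sub_cancel, ← Nat.choose_symm_add] at hj
  rw [intChoose_natCast, intChoose_natCast, Int.cast_natCast, mul_comm, ← hk, hj]

theorem natCast_choose_mul_intChoose (x : R) (j : ℕ) (k : ℤ) :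
    Ring.choose (k : R) j * intChoose x k = Ring.choose x j * intChoose (x - j) (k - j) := by
  rcases lt_or_ge k 0 with hk | hk
  · rw [intChoose_of_neg _ hk, intChoose_of_neg _ (by omega), mul_zero, mul_zero]
  lift k to ℕ using hk
  rcases lt_or_ge k j with hkj | hjk
  · rw [Int.cast_natCast, Ring.choose_natCast, Nat.choose_eq_zero_of_lt hkj,
      intChoose_of_neg (x - j) (by omega : (k : ℤ) - j < 0), Nat.cast_zero, zero_mul, mul_zero]
  · rw [Int.cast_natCast, Ring.choose_natCast, ← Nat.cast_sub hjk, intChoose_natCast,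
      intChoose_natCast, ← nsmul_eq_mul, Ring.choose_smul_choose x hjk]

theorem sum_intChoose_mul_intChoose (x y : R) {M : ℤ} {s : Finset ℤ} (hs : Icc 0 M ⊆ s) :
    ∑ k ∈ s, intChoose x k * intChoose y (M - k) = intChoose (x + y) M := by
  rw [← sum_subset hs fun k _ hk => ?_]
  swap
  · rw [mem_Icc, not_and_or, not_le, not_le] at hk
    rcases hk with hk | hk
    · rw [intChoose_of_neg _ hk, zero_mul]
    · rw [intChoose_of_neg y (by omega), mul_zero]
  rcases lt_or_ge M 0 with hM | hM
  · rw [Icc_eq_empty (by omega), sum_empty, intChoose_of_neg _ hM]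
  lift M to ℕ using hM
  rw [intChoose_natCast, Ring.add_choose_eq M (Commute.all x y),
    Nat.sum_antidiagonal_eq_sum_range_succ_mk]
  symm
  refine sum_nbij' (fun i => (i : ℤ)) Int.toNat ?_ ?_ ?_ ?_ ?_ <;>
    intro i hi <;> simp only [mem_range, mem_Icc] at hi ⊢
  · omega
  · omega
  · omega
  · omega
  · rw [intChoose_natCast, ← Nat.cast_sub (by omega), intChoose_natCast]

theorem sum_choose_sub_mul_intChoose_mul_intChoose (x y : R) (j : ℕ) (M : ℤ) :
    ∑ k ∈ Icc 0 M, Ring.choose (x - k) j * (intChoose x k * intChoose y (M - k)) =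
      Ring.choose x j * intChoose (x - j + y) M := by
  simp_rw [← mul_assoc, choose_sub_mul_intChoose, mul_assoc, ← mul_sum]
  rw [sum_intChoose_mul_intChoose _ _ subset_rfl]

theorem sum_choose_mul_intChoose_mul_intChoose (x y : R) (j : ℕ) (m : ℤ) :
    ∑ w ∈ Icc 0 m, Ring.choose (w : R) j * (intChoose x w * intChoose y (m - w)) =
      Ring.choose x j * intChoose (x - j + y) (m - j) := by
  simp_rw [← mul_assoc, natCast_choose_mul_intChoose, mul_assoc, ← mul_sum]
  have hshift : Icc (0 : ℤ) m = (Icc (-j : ℤ) (m - j)).map (addRightEmbedding (j : ℤ)) := by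
    rw [map_add_right_Icc, neg_add_cancel, sub_add_cancel]
  rw [hshift, sum_map]
  simp_rw [addRightEmbedding_apply, add_sub_cancel_right, sub_add_eq_sub_sub_swap]
  rw [sum_intChoose_mul_intChoose _ _ (Icc_subset_Icc (by omega) le_rfl)]

end IntChoose

theorem Polynomial.descPochhammer_eval_eq_factorial_smul_choose {R : Type*} [CommRing R]
    [BinomialRing R] (r : R) (n : ℕ) :
    (descPochhammer R n).eval r = n.factorial • Ring.choose r n := by
  rw [← Ring.descPochhammer_eq_factorial_smul_choose, ← descPochhammer_map (Int.castRingHom R),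
    eval_map, ← aeval_eq_smeval, aeval_def, algebraMap_int_eq]

theorem Polynomial.span_descPochhammer_Iic_eq_degreeLE (R : Type*) [CommRing R] [IsDomain R]
    (n : ℕ) :
    Submodule.span R (descPochhammer R '' Set.Iic n) = degreeLE R n :=
  Sequence.span_degreeLE
    ⟨descPochhammer R, fun i => by
      rw [degree_eq_natDegree (monic_descPochhammer R i).ne_zero, descPochhammer_natDegree]⟩
    fun i _ => by simp [(monic_descPochhammer R i).leadingCoeff]

theorem sum_eval_mul_eq_of_forall_choose {R ι : Type*} [CommRing R] [IsDomain R]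
    [BinomialRing R] {s t : Finset ι} {x y f g : ι → R} {n : ℕ}
    (h : ∀ j ≤ n,
      ∑ i ∈ s, Ring.choose (x i) j * f i = ∑ i ∈ t, Ring.choose (y i) j * g i)
    {P : R[X]} (hP : P.natDegree ≤ n) :
    ∑ i ∈ s, P.eval (x i) * f i = ∑ i ∈ t, P.eval (y i) * g i := by
  let φ : R[X] →ₗ[R] R := ∑ i ∈ s, f i • leval (x i)
  let ψ : R[X] →ₗ[R] R := ∑ i ∈ t, g i • leval (y i)
  have hPmem : P ∈ Submodule.span R (descPochhammer R '' Set.Iic n) := by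
    rw [span_descPochhammer_Iic_eq_degreeLE, mem_degreeLE]
    exact degree_le_of_natDegree_le hP
  have hφψ : φ P = ψ P := by
    refine LinearMap.eqOn_span' ?_ hPmem
    rintro _ ⟨j, hj, rfl⟩
    simp only [φ, ψ, LinearMap.coe_sum, LinearMap.coe_smul, Finset.sum_apply, Pi.smul_apply,
      leval_apply, descPochhammer_eval_eq_factorial_smul_choose, nsmul_eq_mul, smul_eq_mul]
    simp_rw [mul_left_comm _ (j.factorial : R), ← mul_sum, mul_comm (f _), mul_comm (g _),
      h j hj]
  simpa [φ, ψ, mul_comm] using hφψ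

theorem mbinom_of_lt {A B : ℤ} (h : A < B) : mbinom A B = 0 := by
  rw [mbinom, if_neg (by omega), if_neg (by omega)]

theorem mbinom_eq_intChoose (A B : ℤ) : mbinom A B = intChoose (A : ℚ) (A - B) := by
  rcases lt_or_ge A B with h | h
  · rw [mbinom_of_lt h, intChoose_of_neg _ (by omega)]
  obtain ⟨n, hn⟩ : ∃ n : ℕ, A - B = n := ⟨_, (Int.toNat_of_nonneg (by omega)).symm⟩
  have hAB : (A : ℚ) - B = n := by exact_mod_cast hn
  rw [hn, intChoose_natCast, mbinom]
  split_ifs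
  · have hfact : (n.factorial : ℚ) ≠ 0 := by positivity
    rw [hn, Int.toNat_natCast, prod_div_distrib, hAB, ← descPochhammer_eval_eq_prod_range,
      ← descPochhammer_eval_eq_prod_range, descPochhammer_eval_eq_descFactorial,
      Nat.descFactorial_self, descPochhammer_eval_eq_factorial_smul_choose, nsmul_eq_mul,
      mul_div_cancel_left₀ _ hfact]
  · obtain rfl : n = 0 := by omega
    rw [Ring.choose_zero_right]
  · omega

theorem sum_choose_mul_mbinom_mul_mbinom_eq {A B m : ℤ} {j : ℕ} (hj : j ≤ A + B) :
    ∑ w ∈ Icc (m - B) A, Ring.choose (w : ℚ) j * (mbinom A w * mbinom B (m - w)) =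
      ∑ w ∈ Icc 0 m, Ring.choose (w : ℚ) j * (mbinom A (A - w) * mbinom B (B - m + w)) := by
  obtain ⟨N, hN⟩ : ∃ N : ℕ, A + B - j = N := ⟨_, (Int.toNat_of_nonneg (by omega)).symm⟩
  have hNq : (A : ℚ) - j + B = N := by
    rw [← Int.cast_natCast (R := ℚ) N, ← hN]; push_cast; ring
  simp_rw [mbinom_eq_intChoose, sub_sub_cancel, show ∀ w, B - (B - m + w) = m - w by intro; ring]
  calc _ = ∑ k ∈ Icc 0 (A + B - m), Ring.choose ((A : ℚ) - k) j *
          (intChoose (A : ℚ) k * intChoose (B : ℚ) (A + B - m - k)) := by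
        refine sum_nbij' (A - ·) (A - ·) ?_ ?_ ?_ ?_ ?_ <;> intro w hw <;>
          simp only [mem_Icc] at hw ⊢
        · omega
        · omega
        · omega
        · omega
        · push_cast; ring_nf
    _ = Ring.choose (A : ℚ) j * intChoose (N : ℚ) (N - (m - j)) := by
        rw [sum_choose_sub_mul_intChoose_mul_intChoose, hNq, ← hN]; ring_nf
    _ = _ := by
        rw [intChoose_natCast_sub, sum_choose_mul_intChoose_mul_intChoose, hNq]

theorem support_mul_mbinom_mul_mbinom_subset (A B m : ℤ) (c : ℤ → ℚ) :
    Function.support (fun w => c w * mbinom A w * mbinom B (m - w)) ⊆ Icc (m - B) A := by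
  refine Function.support_subset_iff'.2 fun w hw => ?_
  rw [coe_Icc, Set.mem_Icc, not_and_or, not_le, not_le] at hw
  rcases hw with hw | hw
  · rw [mbinom_of_lt (by omega : B < m - w), mul_zero]
  · rw [mbinom_of_lt hw, mul_zero, zero_mul]

theorem support_mul_mbinom_sub_mul_mbinom_sub_subset (A B m : ℤ) (c : ℤ → ℚ) :
    Function.support (fun w => c w * mbinom A (A - w) * mbinom B (B - m + w)) ⊆ Icc 0 m := by
  refine Function.support_subset_iff'.2 fun w hw => ?_
  rw [coe_Icc, Set.mem_Icc, not_and_or, not_le, not_le] at hw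
  rcases hw with hw | hw
  · rw [mbinom_of_lt (by omega : A < A - w), mul_zero, zero_mul]
  · rw [mbinom_of_lt (by omega : B < B - m + w), mul_zero]

theorem stmt_9 (A B m : ℤ) (q : ℕ) (hq : (q : ℤ) ≤ A + B)
    (P : Polynomial ℚ) (hP : P.natDegree = q) :
    ∑ᶠ w : ℤ, P.eval (w : ℚ) * mbinom A w * mbinom B (m - w)
      = ∑ᶠ w : ℤ, P.eval (w : ℚ) * mbinom A (A - w) * mbinom B (B - m + w) := by
  rw [finsum_eq_sum_of_support_subset _ (support_mul_mbinom_mul_mbinom_subset A B m _),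
    finsum_eq_sum_of_support_subset _ (support_mul_mbinom_sub_mul_mbinom_sub_subset A B m _)]
  simp_rw [mul_assoc]
  exact sum_eval_mul_eq_of_forall_choose
    (fun j hj => sum_choose_mul_mbinom_mul_mbinom_eq (by omega)) hP.le
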